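/- arXiv:1912.01482 — 2 statements merged into one kernel-verified Lean document; each statement's English description precedes it below -/
import Mathlib

section
/- Let $(\mathscr{T}, d)$ be a finite metric space and $X:\mathscr{T}\to L^0(\Omega)$ a real-valued stochastic process. Let $\Theta \subset \mathscr{T}\times\mathscr{T}$ be a finite set and define $\Psi(u) = \max_{s,t\in\mathscr{T}} P\{|X_s - X_t| > d(s,t)\,u\}$ for $u\ge 0$, and $\tau(\lambda) = \int_0^\infty (\lambda \Psi(u) \wedge 1)\,du$. Then $E[\max_{(s,t)\in\Theta} |X_t - X_s|] \le \tau(|\Theta|) \cdot \sup_{(s,t)\in\Theta} d(s,t)$. -/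
open MeasureTheory Set

/-- Chaining lemma, first step: for a process `X` indexed by a finite metric space `𝒯` and a
finite nonempty set `Θ ⊆ 𝒯 × 𝒯`, with `Ψ(u) = max_{s,t} P{|X_s - X_t| > d(s,t) u}` and
`τ(λ) = ∫_0^∞ (λ Ψ(u) ∧ 1) du`, one has
`E[max_{(s,t)∈Θ} |X_t - X_s|] ≤ τ(|Θ|) · sup_{(s,t)∈Θ} d(s,t)`. -/
theorem entropy_lemma_pairs {T : Type*} [Fintype T] [MetricSpace T]
    {Ω : Type*} [MeasurableSpace Ω] (μ : Measure Ω) [IsProbabilityMeasure μ]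
    (X : T → Ω → ℝ) (hX : ∀ t, Measurable (X t))
    (Θ : Finset (T × T)) (hΘ : Θ.Nonempty) :
    (∫⁻ ω, ENNReal.ofReal (Θ.sup' hΘ fun p => |X p.2 ω - X p.1 ω|) ∂μ)
      ≤ (∫⁻ u in Set.Ioi (0 : ℝ),
            ENNReal.ofReal (min ((Θ.card : ℝ) *
              (⨆ p : T × T, (μ {ω | dist p.1 p.2 * u < |X p.1 ω - X p.2 ω|}).toReal)) 1))
          * ENNReal.ofReal (Θ.sup' hΘ fun p => dist p.1 p.2) := by
  obtain ⟨p₀, hp₀⟩ := id hΘ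
  set D : ℝ := Θ.sup' hΘ fun p => dist p.1 p.2 with hDdef
  set M : Ω → ℝ := fun ω => Θ.sup' hΘ fun p => |X p.2 ω - X p.1 ω| with hMdef
  set S : T × T → ℝ → Set Ω := fun p u => {ω | dist p.1 p.2 * u < |X p.1 ω - X p.2 ω|}
    with hSdef
  have hD0 : 0 ≤ D :=
    le_trans dist_nonneg (Finset.le_sup' (fun p => dist p.1 p.2) hp₀)
  have hM0 : ∀ ω, 0 ≤ M ω := fun ω =>
    le_trans (abs_nonneg _) (Finset.le_sup' (fun p => |X p.2 ω - X p.1 ω|) hp₀)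
  have hSmeas : ∀ p u, MeasurableSet (S p u) := fun p u =>
    measurableSet_lt measurable_const ((hX p.1).sub (hX p.2)).abs
  rcases eq_or_lt_of_le hD0 with hDeq | hDpos
  · -- degenerate case: all distances are zero, so all pairs are equal and `M = 0`
    have hzero : ∀ ω, M ω = 0 := by
      intro ω
      refine le_antisymm (Finset.sup'_le _ _ fun p hp => ?_) (hM0 ω)
      have hd : dist p.1 p.2 = 0 :=
        le_antisymm (hDeq ▸ Finset.le_sup' (fun p => dist p.1 p.2) hp) dist_nonneg
      have hpe : p.1 = p.2 := by rwa [dist_eq_zero] at hd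
      simp [hpe]
    simp only [hMdef] at hzero
    simp [hzero]
  · -- main case `D > 0`
    have hDne : D ≠ 0 := ne_of_gt hDpos
    have hMmeas : Measurable M := by
      have := Finset.measurable_sup' hΘ (f := fun p ω => |X p.2 ω - X p.1 ω|)
        (fun p _ => ((hX p.2).sub (hX p.1)).abs)
      convert this using 1
      ext ω
      simp [hMdef, Finset.sup'_apply]
    -- the bounding function
    set g : ℝ → ENNReal := fun u => ENNReal.ofReal (min ((Θ.card : ℝ) *
        (⨆ p : T × T, (μ (S p u)).toReal)) 1) with hgdef
    have hbdd : ∀ u : ℝ, BddAbove (Set.range fun p : T × T => (μ (S p u)).toReal) :=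
      fun u => Set.Finite.bddAbove (Set.finite_range _)
    have hganti : Antitone g := by
      intro u v huv
      apply ENNReal.ofReal_le_ofReal
      apply min_le_min _ le_rfl
      apply mul_le_mul_of_nonneg_left _ (Nat.cast_nonneg _)
      apply ciSup_mono (hbdd u)
      intro p
      apply ENNReal.toReal_mono (measure_ne_top μ _)
      apply measure_mono
      intro ω hω
      exact lt_of_le_of_lt (mul_le_mul_of_nonneg_left huv dist_nonneg) hω
    have hgmeas : Measurable g := hganti.measurable
    -- pointwise bound on tail probabilities
    have bound : ∀ u : ℝ, u ∈ Set.Ioi (0:ℝ) → μ {ω | u < M ω / D} ≤ g u := by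
      intro u hu
      have hset : {ω | u < M ω / D} ⊆ ⋃ p ∈ Θ, S p u := by
        intro ω hω
        rw [Set.mem_setOf_eq, lt_div_iff₀ hDpos] at hω
        rw [hMdef, Finset.lt_sup'_iff] at hω
        obtain ⟨p, hp, hlt⟩ := hω
        refine Set.mem_iUnion₂.2 ⟨p, hp, ?_⟩
        have h1 : dist p.1 p.2 * u ≤ u * D := by
          rw [mul_comm u D]
          exact mul_le_mul_of_nonneg_right (Finset.le_sup' (fun p => dist p.1 p.2) hp) hu.le
        rw [hSdef]
        simp only [Set.mem_setOf_eq]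
        rw [abs_sub_comm]
        exact lt_of_le_of_lt h1 hlt
      rcases min_cases ((Θ.card : ℝ) * (⨆ p : T × T, (μ (S p u)).toReal)) 1 with
        ⟨heq, _⟩ | ⟨heq, _⟩ <;> rw [hgdef] <;> simp only [heq]
      · calc μ {ω | u < M ω / D} ≤ μ (⋃ p ∈ Θ, S p u) := measure_mono hset
          _ ≤ ∑ p ∈ Θ, μ (S p u) := measure_biUnion_finset_le Θ _
          _ ≤ ∑ _p ∈ Θ, ENNReal.ofReal (⨆ q : T × T, (μ (S q u)).toReal) := by
              refine Finset.sum_le_sum fun p _ => ?_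
              rw [← ENNReal.ofReal_toReal (measure_ne_top μ (S p u))]
              exact ENNReal.ofReal_le_ofReal (le_ciSup (hbdd u) p)
          _ = (Θ.card : ENNReal) * ENNReal.ofReal (⨆ q : T × T, (μ (S q u)).toReal) := by
              rw [Finset.sum_const, nsmul_eq_mul]
          _ = ENNReal.ofReal ((Θ.card : ℝ) * ⨆ q : T × T, (μ (S q u)).toReal) := by
              rw [ENNReal.ofReal_mul (Nat.cast_nonneg _), ENNReal.ofReal_natCast]
      · calc μ {ω | u < M ω / D} ≤ 1 := prob_le_one
          _ = ENNReal.ofReal 1 := by simp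
    -- put everything together
    have hsplit : ∀ ω, ENNReal.ofReal (M ω) = ENNReal.ofReal D * ENNReal.ofReal (M ω / D) := by
      intro ω
      rw [← ENNReal.ofReal_mul hD0, mul_comm, div_mul_cancel₀ _ hDne]
    calc (∫⁻ ω, ENNReal.ofReal (M ω) ∂μ)
        = ∫⁻ ω, ENNReal.ofReal D * ENNReal.ofReal (M ω / D) ∂μ := by
          simp_rw [hsplit]
      _ = ENNReal.ofReal D * ∫⁻ ω, ENNReal.ofReal (M ω / D) ∂μ :=
          lintegral_const_mul' _ _ ENNReal.ofReal_ne_top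
      _ = ENNReal.ofReal D * ∫⁻ u in Set.Ioi (0:ℝ), μ {ω | u < M ω / D} := by
          rw [lintegral_eq_lintegral_meas_lt μ
            (ae_of_all _ fun ω => div_nonneg (hM0 ω) hD0)
            ((hMmeas.div_const D).aemeasurable)]
      _ ≤ ENNReal.ofReal D * ∫⁻ u in Set.Ioi (0:ℝ), g u :=
          mul_le_mul_right (setLIntegral_mono hgmeas bound) _
      _ = (∫⁻ u in Set.Ioi (0:ℝ), g u) * ENNReal.ofReal D := mul_comm _ _
end

section
/- Let $(\mathscr{T}, d)$ be a nonempty finite metric space with diameter $\Delta(\mathscr{T}) = \max_{s,t\in\mathscr{T}} d(s,t)$, and let $X:\mathscr{T}\to L^1(\Omega)$ be a stochastic process. Define $\Psi(u) = \max_{s,t\in\mathscr{T}} P\{|X_s - X_t| > d(s,t)u\}$ and $\tau(\lambda) = \int_0^\infty(\lambda\Psi(u)\wedge 1)\,du$. Let $\mathbf{N}_{\mathscr{T}}(r)$ denote the minimal number of open $d$-balls of radius $r$ needed to cover $\mathscr{T}$. Then for every $t_0\in\mathscr{T}$, $E[\max_{t\in\mathscr{T}}|X_t - X_{t_0}|]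 \le 8\int_0^{\Delta(\mathscr{T})/4} \tau(\mathbf{N}_{\mathscr{T}}(r))\,dr$. -/
/-! Dudley's chaining argument. Take `ρₖ = Δ / 2 ^ (k + 2)`-nets `Cₖ` of minimal size `N(ρₖ)`,
link every point of `Cₖ₊₁` to a point of `Cₖ` within `ρₖ` and every point of `C₀` to `t₀`; since
`T` is finite, `C_K = T` for large `K`. Telescoping along the links bounds `max_t |X_t - X_{t₀}|`
by the sum over `k` of the maximal increment over the `N(ρₖ)` links of level `k`, all of length at
most `4ρₖ`. A union bound and the layer-cake formula bound the expectation of that maximum by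
`4ρₖ τ(N(ρₖ))`, and as `τ ∘ N` is antitone, `4ρₖ τ(N(ρₖ)) ≤ 8 ∫_{ρₖ₊₁}^{ρₖ} τ(N(r)) dr`. -/

open MeasureTheory Set

/-- The covering number: the minimal number of open balls of radius `r` covering `T`. -/
noncomputable def covN (T : Type*) [MetricSpace T] (r : ℝ) : ℕ :=
  sInf {n : ℕ | ∃ c : Fin n → T, ∀ x : T, ∃ i, dist x (c i) < r}

open Filter
open scoped ENNReal Topology

section CoveringNumber

variable {T : Type*} [Finite T] [MetricSpace T]

theorem exists_cover_covN {r : ℝ} (hr : 0 < r) :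
    ∃ c : Fin (covN T r) → T, ∀ x : T, ∃ i, dist x (c i) < r := by
  obtain ⟨n, ⟨e⟩⟩ := Finite.exists_equiv_fin T
  have hn : n ∈ {n : ℕ | ∃ c : Fin n → T, ∀ x : T, ∃ i, dist x (c i) < r} :=
    ⟨e.symm, fun x => ⟨e x, by simpa using hr⟩⟩
  exact Nat.sInf_mem ⟨n, hn⟩

theorem covN_anti {r r' : ℝ} (hr : 0 < r) (h : r ≤ r') : covN T r' ≤ covN T r := by
  obtain ⟨c, hc⟩ := exists_cover_covN (T := T) hr
  exact Nat.sInf_le ⟨c, fun x => (hc x).imp fun _ hi => hi.trans_le h⟩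

theorem Finite.eventually_forall_dist_lt_imp_eq {ρ : ℕ → ℝ} (hρ : Tendsto ρ atTop (𝓝 0)) :
    ∀ᶠ k in atTop, ∀ x y : T, dist x y < ρ k → x = y := by
  simp only [eventually_all]
  intro x y
  rcases eq_or_ne x y with rfl | hxy
  · exact Eventually.of_forall fun _ _ => rfl
  · filter_upwards [hρ.eventually (gt_mem_nhds (dist_pos.2 hxy))] with k hk h
    exact absurd h hk.le.not_gt

end CoveringNumber

theorem abs_sub_le_sum_of_chain {α : Type*} (f : α → ℝ) (t₀ : α) (S : ℕ → Set α)
    (q : ℕ → α → α) (M : ℕ → ℝ) (hq₀ : ∀ s ∈ S 0, q 0 s = t₀)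
    (hq : ∀ k, MapsTo (q (k + 1)) (S (k + 1)) (S k))
    (hM : ∀ k, ∀ s ∈ S k, |f s - f (q k s)| ≤ M k) :
    ∀ j, ∀ s ∈ S j, |f s - f t₀| ≤ ∑ k ∈ Finset.range (j + 1), M k := by
  intro j
  induction j with
  | zero => intro s hs; simpa [hq₀ s hs] using hM 0 s hs
  | succ j ih =>
    intro s hs
    rw [Finset.sum_range_succ, add_comm]
    calc |f s - f t₀| ≤ |f s - f (q (j + 1) s)| + |f (q (j + 1) s) - f t₀| := abs_sub_le _ _ _
      _ ≤ M (j + 1) + ∑ k ∈ Finset.range (j + 1), M k :=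
        add_le_add (hM _ s hs) (ih _ (hq j hs))

theorem sum_ofReal_mul_le_setLIntegral {g : ℝ → ℝ≥0∞} (hg : ∀ r s, 0 < r → r ≤ s → g s ≤ g r)
    (K : ℕ) {a : ℝ} (ha : 0 < a) :
    ∑ k ∈ Finset.range K, ENNReal.ofReal (a / 2 ^ (k + 1)) * g (a / 2 ^ k)
      ≤ ∫⁻ r in Ioo 0 a, g r := by
  induction K generalizing a with
  | zero => simp
  | succ K ih =>
    have htop : ENNReal.ofReal (a / 2) * g a ≤ ∫⁻ r in Ico (a / 2) a, g r := by
      calc ENNReal.ofReal (a / 2) * g a = ∫⁻ _ in Ico (a / 2) a, g a := by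
            rw [setLIntegral_const, Real.volume_Ico, mul_comm]; congr 2; ring
        _ ≤ ∫⁻ r in Ico (a / 2) a, g r :=
          setLIntegral_mono' measurableSet_Ico fun r hr => hg r a (by linarith [hr.1]) hr.2.le
    have hdisj : Disjoint (Ioo 0 (a / 2)) (Ico (a / 2) a) :=
      Set.disjoint_left.2 fun _ h₁ h₂ => h₁.2.not_ge h₂.1
    calc ∑ k ∈ Finset.range (K + 1), ENNReal.ofReal (a / 2 ^ (k + 1)) * g (a / 2 ^ k)
        = ∑ k ∈ Finset.range K, ENNReal.ofReal (a / 2 / 2 ^ (k + 1)) * g (a / 2 / 2 ^ k)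
            + ENNReal.ofReal (a / 2) * g a := by
          simp only [Finset.sum_range_succ', div_div, ← pow_succ']; simp
      _ ≤ (∫⁻ r in Ioo 0 (a / 2), g r) + ∫⁻ r in Ico (a / 2) a, g r :=
          add_le_add (ih (half_pos ha)) htop
      _ = ∫⁻ r in Ioo 0 a, g r := by
          rw [← lintegral_union measurableSet_Ico hdisj,
            Ioo_union_Ico_eq_Ioo (half_pos ha) (half_lt_self ha).le]

section MaximalInequality

variable {Ω : Type*} [MeasurableSpace Ω] (μ : Measure Ω)

theorem measure_lt_iSup_le_sum {ι : Type*} [Fintype ι] [Nonempty ι] (f : ι → Ω → ℝ) (c : ℝ) :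
    μ {ω | c < ⨆ i, f i ω} ≤ ∑ i, μ {ω | c < f i ω} := by
  refine (measure_mono fun ω hω => ?_).trans (measure_iUnion_fintype_le μ fun i => {ω | c < f i ω})
  obtain ⟨i, hi⟩ := exists_lt_of_lt_ciSup (mem_ofPred_eq ▸ hω)
  exact mem_iUnion.2 ⟨i, hi⟩

theorem lintegral_ofReal_iSup_abs_le [IsProbabilityMeasure μ] {ι : Type*} [Fintype ι]
    [Nonempty ι] (Y : ι → Ω → ℝ) (hY : ∀ i, Measurable (Y i)) (Ψ : ℝ → ℝ≥0∞) {a : ℝ}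
    (ha : 0 < a) (htail : ∀ i, ∀ u, 0 < u → μ {ω | a * u < |Y i ω|} ≤ Ψ u) :
    ∫⁻ ω, ENNReal.ofReal (⨆ i, |Y i ω|) ∂μ
      ≤ ENNReal.ofReal a * ∫⁻ u in Ioi 0, min (Fintype.card ι * Ψ u) 1 := by
  set Z : Ω → ℝ := fun ω => ⨆ i, |Y i ω|
  have hZ : Measurable Z := Measurable.iSup fun i => (hY i).abs
  have hZa : ∀ ω, 0 ≤ Z ω / a := fun ω => div_nonneg (Real.iSup_nonneg fun i => abs_nonneg _) ha.le
  have hsplit : ∀ ω, ENNReal.ofReal (Z ω) = ENNReal.ofReal a * ENNReal.ofReal (Z ω / a) := by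
    intro ω
    rw [← ENNReal.ofReal_mul ha.le, mul_div_cancel₀ _ ha.ne']
  have hlevel : ∀ u, 0 < u → μ {ω | u < Z ω / a} ≤ Fintype.card ι * Ψ u := by
    intro u hu
    calc μ {ω | u < Z ω / a} = μ {ω | a * u < ⨆ i, |Y i ω|} := by
          simp_rw [lt_div_iff₀ ha, mul_comm a u]; rfl
      _ ≤ ∑ i, μ {ω | a * u < |Y i ω|} := measure_lt_iSup_le_sum μ _ _
      _ ≤ ∑ _i : ι, Ψ u := Finset.sum_le_sum fun i _ => htail i u hu
      _ = Fintype.card ι * Ψ u := by simp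
  calc ∫⁻ ω, ENNReal.ofReal (Z ω) ∂μ = ENNReal.ofReal a * ∫⁻ ω, ENNReal.ofReal (Z ω / a) ∂μ := by
        simp_rw [hsplit]
        exact lintegral_const_mul _ (hZ.div_const a).ennreal_ofReal
    _ = ENNReal.ofReal a * ∫⁻ u in Ioi 0, μ {ω | u < Z ω / a} := by
        rw [lintegral_eq_lintegral_meas_lt μ (ae_of_all _ hZa) (hZ.div_const a).aemeasurable]
    _ ≤ ENNReal.ofReal a * ∫⁻ u in Ioi 0, min (Fintype.card ι * Ψ u) 1 :=
        mul_le_mul_right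
          (setLIntegral_mono' measurableSet_Ioi fun u hu => le_min (hlevel u hu) prob_le_one) _

end MaximalInequality

section Chaining

variable {T Ω : Type*} [MetricSpace T] [MeasurableSpace Ω] (μ : Measure Ω) (X : T → Ω → ℝ)

/-- The paper's `Ψ(u)`. -/
noncomputable def incrementTail (u : ℝ) : ℝ≥0∞ :=
  ⨆ p : T × T, μ {ω | dist p.1 p.2 * u < |X p.1 ω - X p.2 ω|}

/-- The paper's `τ(m)`. -/
noncomputable def tailIntegral (m : ℕ) : ℝ≥0∞ :=
  ∫⁻ u in Ioi 0, min (m * incrementTail μ X u) 1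

theorem tailIntegral_mono : Monotone (tailIntegral μ X) := fun _ _ hm =>
  lintegral_mono fun _ => min_le_min_right _ (mul_le_mul_left (Nat.cast_le.2 hm) _)

theorem ofReal_min_mul_iSup_toReal [IsFiniteMeasure μ] (m : ℕ) (u : ℝ) :
    ENNReal.ofReal (min ((m : ℝ) *
        ⨆ p : T × T, (μ {ω | dist p.1 p.2 * u < |X p.1 ω - X p.2 ω|}).toReal) 1)
      = min (m * incrementTail μ X u) 1 := by
  have hfin : incrementTail μ X u ≠ ⊤ :=
    ne_top_of_le_ne_top (measure_ne_top μ univ) (iSup_le fun _ => measure_mono (subset_univ _))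
  unfold incrementTail at hfin ⊢
  rw [← ENNReal.toReal_iSup fun _ => measure_ne_top μ _, ENNReal.ofReal_min,
    ENNReal.ofReal_mul (Nat.cast_nonneg m), ENNReal.ofReal_natCast, ENNReal.ofReal_toReal hfin,
    ENNReal.ofReal_one]

variable [IsProbabilityMeasure μ] {X}

theorem lintegral_ofReal_iSup_abs_sub_le (hX : ∀ t, Measurable (X t)) {ι : Type*} [Fintype ι]
    [Nonempty ι] (s t : ι → T) {D : ℝ} (hD : 0 < D) (hst : ∀ i, dist (s i) (t i) ≤ D) :
    ∫⁻ ω, ENNReal.ofReal (⨆ i, |X (s i) ω - X (t i) ω|) ∂μ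
      ≤ ENNReal.ofReal D * tailIntegral μ X (Fintype.card ι) := by
  refine lintegral_ofReal_iSup_abs_le μ _ (fun i => (hX _).sub (hX _)) _ hD fun i u hu => ?_
  refine (measure_mono fun ω hω => ?_).trans (le_iSup (fun p : T × T =>
    μ {ω | dist p.1 p.2 * u < |X p.1 ω - X p.2 ω|}) (s i, t i))
  exact (mul_le_mul_of_nonneg_right (hst i) hu.le).trans_lt hω

theorem lintegral_ofReal_iSup_abs_sub_le_sum [Finite T] (hX : ∀ t, Measurable (X t)) (t₀ : T)
    {a : ℝ} (ha : 0 < a) (hdiam : Metric.diam (univ : Set T) ≤ 4 * a) {K : ℕ}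
    (hK : ∀ s t : T, dist s t < a / 2 ^ K → s = t) :
    ∫⁻ ω, ENNReal.ofReal (⨆ t, |X t ω - X t₀ ω|) ∂μ
      ≤ ∑ k ∈ Finset.range (K + 1),
          ENNReal.ofReal (4 * (a / 2 ^ k)) * tailIntegral μ X (covN T (a / 2 ^ k)) := by
  set ρ : ℕ → ℝ := fun k => a / 2 ^ k
  have hρ : ∀ k, 0 < ρ k := fun k => by positivity
  choose c hc using fun k => exists_cover_covN (T := T) (hρ k)
  choose π hπ using hc
  have : Nonempty T := ⟨t₀⟩
  have : ∀ k, Nonempty (Fin (covN T (ρ k))) := fun k => ⟨π k t₀⟩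
  let q : ℕ → T → T := fun k s => Nat.casesOn k t₀ fun k => c k (π k s)
  have hq : ∀ k i, dist (c k i) (q k (c k i)) ≤ 4 * ρ k := by
    rintro (_ | k) i
    · show dist (c 0 i) t₀ ≤ 4 * ρ 0
      simpa [ρ] using
        (Metric.dist_le_diam_of_mem finite_univ.isBounded (mem_univ _) (mem_univ _)).trans hdiam
    · have hhalf : ρ k = 2 * ρ (k + 1) := by simp only [ρ, pow_succ]; field_simp
      linarith [(hπ k (c (k + 1) i)).le, hρ (k + 1)]
  set M : ℕ → Ω → ℝ := fun k ω => ⨆ i, |X (c k i) ω - X (q k (c k i)) ω|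
  have hM : ∀ k ω, 0 ≤ M k ω := fun k ω => Real.iSup_nonneg fun _ => abs_nonneg _
  have hchain : ∀ ω, ⨆ t, |X t ω - X t₀ ω| ≤ ∑ k ∈ Finset.range (K + 1), M k ω := by
    intro ω
    refine ciSup_le fun t => abs_sub_le_sum_of_chain (X · ω) t₀ (fun k => range (c k)) q
      (M · ω) (fun _ _ => rfl) (fun k _ _ => mem_range_self _) ?_ K t ?_
    · rintro k _ ⟨i, rfl⟩
      exact le_ciSup (Finite.bddAbove_range fun i => |X (c k i) ω - X (q k (c k i)) ω|) i
    · exact ⟨π K t, (hK _ _ (hπ K t)).symm⟩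
  calc ∫⁻ ω, ENNReal.ofReal (⨆ t, |X t ω - X t₀ ω|) ∂μ
      ≤ ∫⁻ ω, ∑ k ∈ Finset.range (K + 1), ENNReal.ofReal (M k ω) ∂μ := by
        refine lintegral_mono fun ω => ?_
        rw [← ENNReal.ofReal_sum_of_nonneg fun k _ => hM k ω]
        exact ENNReal.ofReal_le_ofReal (hchain ω)
    _ = ∑ k ∈ Finset.range (K + 1), ∫⁻ ω, ENNReal.ofReal (M k ω) ∂μ :=
        lintegral_finsetSum _ fun k _ =>
          (Measurable.iSup fun _ => ((hX _).sub (hX _)).abs).ennreal_ofReal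
    _ ≤ _ := Finset.sum_le_sum fun k _ => by
        simpa using lintegral_ofReal_iSup_abs_sub_le μ hX _ _ (by linarith [hρ k]) (hq k)

end Chaining

theorem entropy_chaining_bound_general {T : Type*} [Fintype T] [MetricSpace T]
    {Ω : Type*} [MeasurableSpace Ω] (μ : Measure Ω) [IsProbabilityMeasure μ]
    (X : T → Ω → ℝ) (hX : ∀ t, Measurable (X t)) (t₀ : T) :
    (∫⁻ ω, ENNReal.ofReal (⨆ t : T, |X t ω - X t₀ ω|) ∂μ)
      ≤ 8 * ∫⁻ r in Set.Ioo (0 : ℝ) (Metric.diam (Set.univ : Set T) / 4),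
            ∫⁻ u in Set.Ioi (0 : ℝ),
              ENNReal.ofReal (min ((covN T r : ℝ) *
                (⨆ p : T × T, (μ {ω | dist p.1 p.2 * u < |X p.1 ω - X p.2 ω|}).toReal)) 1) := by
  simp_rw [ofReal_min_mul_iSup_toReal]
  rcases (Metric.diam_nonneg (s := (univ : Set T))).eq_or_lt with hΔ | hΔ
  · have hpt : ∀ t, t = t₀ := fun t => dist_le_zero.1 <|
      hΔ ▸ Metric.dist_le_diam_of_mem finite_univ.isBounded (mem_univ t) (mem_univ t₀)
    have hsup : ∀ ω, ⨆ t, |X t ω - X t₀ ω| ≤ 0 := fun ω =>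
      Real.iSup_nonpos fun t => by rw [hpt t, sub_self, abs_zero]
    simp [ENNReal.ofReal_eq_zero.2 (hsup _)]
  set a := Metric.diam (univ : Set T) / 4
  have ha : 0 < a := by positivity
  obtain ⟨K, hK⟩ := (Finite.eventually_forall_dist_lt_imp_eq (T := T)
    (tendsto_const_nhds.div_atTop (tendsto_pow_atTop_atTop_of_one_lt one_lt_two))).exists
  calc _ ≤ ∑ k ∈ Finset.range (K + 1),
          ENNReal.ofReal (4 * (a / 2 ^ k)) * tailIntegral μ X (covN T (a / 2 ^ k)) :=
        lintegral_ofReal_iSup_abs_sub_le_sum μ hX t₀ ha (mul_div_cancel₀ _ four_ne_zero).ge hK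
    _ = 8 * ∑ k ∈ Finset.range (K + 1),
          ENNReal.ofReal (a / 2 ^ (k + 1)) * tailIntegral μ X (covN T (a / 2 ^ k)) := by
        rw [Finset.mul_sum]
        refine Finset.sum_congr rfl fun k _ => ?_
        rw [← mul_assoc, ← ENNReal.ofReal_ofNat, ← ENNReal.ofReal_mul (by norm_num), pow_succ]
        ring_nf
    _ ≤ 8 * ∫⁻ r in Ioo 0 a, tailIntegral μ X (covN T r) := by
        gcongr
        exact sum_ofReal_mul_le_setLIntegral
          (fun r s hr hrs => tailIntegral_mono μ X (covN_anti hr hrs)) _ ha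

/-- Chaining bound: for a process `X` on a finite nonempty metric space `𝒯`, with
`Ψ(u) = max_{s,t} P{|X_s - X_t| > d(s,t)u}`, `τ(λ) = ∫_0^∞(λΨ(u) ∧ 1)du`, and covering
numbers `N(r)`, one has `E[max_t |X_t - X_{t₀}|] ≤ 8 ∫_0^{Δ(𝒯)/4} τ(N(r)) dr` for every
`t₀ ∈ 𝒯`, where `Δ(𝒯)` is the diameter. -/
theorem entropy_chaining_bound {T : Type*} [Fintype T] [Nonempty T] [MetricSpace T]
    {Ω : Type*} [MeasurableSpace Ω] (μ : Measure Ω) [IsProbabilityMeasure μ]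
    (X : T → Ω → ℝ) (hX : ∀ t, Measurable (X t)) (t₀ : T) :
    (∫⁻ ω, ENNReal.ofReal (⨆ t : T, |X t ω - X t₀ ω|) ∂μ)
      ≤ 8 * ∫⁻ r in Set.Ioo (0 : ℝ) (Metric.diam (Set.univ : Set T) / 4),
            ∫⁻ u in Set.Ioi (0 : ℝ),
              ENNReal.ofReal (min ((covN T r : ℝ) *
                (⨆ p : T × T, (μ {ω | dist p.1 p.2 * u < |X p.1 ω - X p.2 ω|}).toReal)) 1) :=
  entropy_chaining_bound_general μ X hX t₀
end
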